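/- arXiv:2109.05279 — 4 statements merged into one kernel-verified Lean document; each statement's English description precedes it below -/
import Mathlib

section
/- Let n ≥ 1, let ψ : ℝⁿ → ℝ be continuous, let h : ℝⁿ × ℝ → ℝ be continuous, and let ρ : ℝ → ℝ be continuous and nonnegative. Assume that for every z ∈ ℝⁿ the function x ↦ h(z, x)·ρ(x) is Lebesgue integrable on ℝ, and that for every compact set K ⊆ ℝⁿ and every ε > 0 there exists A > 0 such that ∫_{{|x| > A}} |h(z, x)|·ρ(x) dx < ε for all z ∈ K (uniform convergence of the integrals on compact sets). Then the function G(z) := ∫_{ψ(z)}^{∞} h(z, x)·ρ(x) dx is continuous on ℝⁿ. -/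
open MeasureTheory

theorem stmt_5 (n : ℕ) (hn : 1 ≤ n)
    (ψ : (Fin n → ℝ) → ℝ) (hψ : Continuous ψ)
    (h : (Fin n → ℝ) × ℝ → ℝ) (hh : Continuous h)
    (ρ : ℝ → ℝ) (hρ : Continuous ρ) (hρ0 : ∀ x, 0 ≤ ρ x)
    (hint : ∀ z : Fin n → ℝ, Integrable (fun x => h (z, x) * ρ x))
    (hunif : ∀ K : Set (Fin n → ℝ), IsCompact K → ∀ ε > 0, ∃ A > 0,
      ∀ z ∈ K, (∫ x in {x : ℝ | A < |x|}, |h (z, x)| * ρ x) < ε) :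
    Continuous fun z => ∫ x in Set.Ioi (ψ z), h (z, x) * ρ x := by
  set f : (Fin n → ℝ) → ℝ → ℝ := fun z x => h (z, x) * ρ x with hfdef
  have hfc : ∀ z, Continuous (f z) := fun z =>
    (hh.comp (Continuous.prodMk_right z)).mul hρ
  have habs : ∀ z x, |h (z, x)| * ρ x = |f z x| := by
    intro z x; rw [hfdef]; simp only []
    rw [abs_mul, abs_of_nonneg (hρ0 x)]
  rw [continuous_iff_continuousAt]
  intro z₀
  rw [ContinuousAt, Metric.tendsto_nhds]
  intro ε hε
  set B : ℝ := |ψ z₀| + 1 with hB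
  have hB0 : 0 < B := by positivity
  obtain ⟨A, hA0, hAtail⟩ := hunif (Metric.closedBall z₀ 1) (isCompact_closedBall z₀ 1)
    (ε / 4) (by linarith)
  set A' : ℝ := max A B with hA'
  have hBA' : B ≤ A' := le_max_right _ _
  have hA'0 : 0 < A' := lt_of_lt_of_le hB0 hBA'
  -- tail bound
  have htail : ∀ z ∈ Metric.closedBall z₀ 1, |∫ x in Set.Ioi A', f z x| < ε / 4 := by
    intro z hz
    have hInt : Integrable (fun x => |f z x|) := (hint z).abs
    have h1 : |∫ x in Set.Ioi A', f z x| ≤ ∫ x in Set.Ioi A', |f z x| := by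
      simpa [Real.norm_eq_abs] using
        norm_integral_le_integral_norm (μ := volume.restrict (Set.Ioi A')) (f z)
    have hsub1 : Set.Ioi A' ⊆ {x : ℝ | A' < |x|} := by
      intro x hx
      have : (0:ℝ) < x := lt_trans hA'0 hx
      simpa [abs_of_pos this] using hx
    have hsub2 : {x : ℝ | A' < |x|} ⊆ {x : ℝ | A < |x|} := by
      intro x hx
      exact lt_of_le_of_lt (le_max_left A B) hx
    have h2 : ∫ x in Set.Ioi A', |f z x| ≤ ∫ x in {x : ℝ | A' < |x|}, |f z x| :=
      setIntegral_mono_set hInt.integrableOn (Filter.Eventually.of_forall fun x => abs_nonneg _)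
        (HasSubset.Subset.eventuallyLE hsub1)
    have h3 : ∫ x in {x : ℝ | A' < |x|}, |f z x| ≤ ∫ x in {x : ℝ | A < |x|}, |f z x| :=
      setIntegral_mono_set hInt.integrableOn (Filter.Eventually.of_forall fun x => abs_nonneg _)
        (HasSubset.Subset.eventuallyLE hsub2)
    have h4 : ∫ x in {x : ℝ | A < |x|}, |f z x| < ε / 4 := by
      have := hAtail z hz
      simpa [habs] using this
    linarith
  -- the main (truncated) part, via dominated convergence
  set F : (Fin n → ℝ) → ℝ → ℝ := fun z => (Set.Ioi (ψ z)).indicator (f z) with hF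
  set G' : (Fin n → ℝ) → ℝ := fun z => ∫ x in Set.Ioc (-B) A', F z x with hG'
  -- bound on compact
  obtain ⟨p, hpmem, hpmax⟩ := (IsCompact.prod (isCompact_closedBall z₀ 1)
      (isCompact_Icc (a := -B) (b := A'))).exists_isMaxOn
    ⟨(z₀, 0), Set.mem_prod.mpr ⟨Metric.mem_closedBall_self (by norm_num),
      by simp only [Set.mem_Icc]; constructor <;> linarith⟩⟩
    ((hh.abs.mul (hρ.comp continuous_snd)).continuousOn)
  set M : ℝ := |f p.1 p.2| with hM
  have hMb : ∀ z ∈ Metric.closedBall z₀ 1, ∀ x ∈ Set.Icc (-B) A', |f z x| ≤ M := by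
    intro z hz x hx
    have := hpmax (Set.mk_mem_prod hz hx)
    simpa [habs] using this
  have hG'cont : Filter.Tendsto G' (nhds z₀) (nhds (G' z₀)) := by
    apply tendsto_integral_filter_of_dominated_convergence (fun _ => M)
    · exact Filter.Eventually.of_forall fun z =>
        ((hfc z).aestronglyMeasurable).indicator measurableSet_Ioi
    · filter_upwards [Metric.closedBall_mem_nhds z₀ one_pos] with z hz
      refine (ae_restrict_iff' measurableSet_Ioc).2 (Filter.Eventually.of_forall fun x hx => ?_)
      rw [Real.norm_eq_abs]
      have hle : |F z x| ≤ |f z x| := by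
        rw [hF]; by_cases hxx : x ∈ Set.Ioi (ψ z) <;>
          simp [Set.indicator_apply, hxx, abs_nonneg]
      exact le_trans hle (hMb z hz x ⟨le_of_lt hx.1, hx.2⟩)
    · exact integrable_const M
    · have hne : ∀ᵐ x ∂(volume.restrict (Set.Ioc (-B) A')), x ≠ ψ z₀ := by
        refine ae_restrict_of_ae ?_
        have : volume ({ψ z₀} : Set ℝ) = 0 := measure_singleton _
        filter_upwards [measure_eq_zero_iff_ae_notMem.mp this] with x hx
        simpa using hx
      filter_upwards [hne] with x hx
      rcases lt_or_gt_of_ne hx with hlt | hgt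
      · -- x < ψ z₀ : eventually F z x = 0
        have hx0 : F z₀ x = 0 := by
          rw [hF]; simp [Set.indicator_apply, not_lt.mpr (le_of_lt hlt)]
        rw [hx0]
        have hev : ∀ᶠ z in nhds z₀, F z x = 0 := by
          have : ∀ᶠ z in nhds z₀, x < ψ z :=
            hψ.continuousAt.eventually_const_lt hlt
          filter_upwards [this] with z hzx
          rw [hF]; simp [Set.indicator_apply, not_lt.mpr (le_of_lt hzx)]
        exact Filter.Tendsto.congr' (Filter.EventuallyEq.symm hev) tendsto_const_nhds
      · -- x > ψ z₀ : eventually F z x = f z x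
        have hx0 : F z₀ x = f z₀ x := by
          rw [hF]; simp [Set.indicator_apply, hgt]
        rw [hx0]
        have hev : ∀ᶠ z in nhds z₀, f z x = F z x := by
          have : ∀ᶠ z in nhds z₀, ψ z < x :=
            hψ.continuousAt.eventually_lt_const hgt
          filter_upwards [this] with z hzx
          rw [hF]; simp [Set.indicator_apply, hzx]
        refine Filter.Tendsto.congr' hev ?_
        exact ((hh.comp (continuous_id.prodMk continuous_const)).mul
          continuous_const).tendsto z₀
  -- identification: for z with -B < ψ z ≤ A', the integral splits
  have hsplit : ∀ z, -B < ψ z → ψ z ≤ A' →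
      (∫ x in Set.Ioi (ψ z), f z x) = G' z + ∫ x in Set.Ioi A', f z x := by
    intro z h1 h2
    have hunion : Set.Ioc (ψ z) A' ∪ Set.Ioi A' = Set.Ioi (ψ z) :=
      Set.Ioc_union_Ioi_eq_Ioi h2
    have heq : G' z = ∫ x in Set.Ioc (ψ z) A', f z x := by
      rw [hG', hF]
      simp only []
      rw [setIntegral_indicator measurableSet_Ioi, Set.Ioc_inter_Ioi,
        max_eq_right (le_of_lt h1)]
    rw [heq, ← hunion,
      setIntegral_union (Set.Ioc_disjoint_Ioi le_rfl) measurableSet_Ioi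
        (hint z).integrableOn (hint z).integrableOn]
  -- assemble
  have hψev : ∀ᶠ z in nhds z₀, |ψ z - ψ z₀| < 1 := by
    have := hψ.continuousAt (x := z₀)
    rw [ContinuousAt, Metric.tendsto_nhds] at this
    simpa [Real.dist_eq] using this 1 one_pos
  have hG'ev : ∀ᶠ z in nhds z₀, dist (G' z) (G' z₀) < ε / 4 := by
    rw [Metric.tendsto_nhds] at hG'cont
    exact hG'cont (ε / 4) (by linarith)
  filter_upwards [Metric.closedBall_mem_nhds z₀ one_pos, hψev, hG'ev] with z hz hψz hG'z
  have hψz1 : -B < ψ z := by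
    have h1 : ψ z₀ - ψ z < 1 := by
      have := abs_lt.mp hψz; linarith [this.2]
    have := neg_abs_le (ψ z₀)
    simp only [hB]; linarith
  have hψz2 : ψ z ≤ A' := by
    have h1 : ψ z - ψ z₀ < 1 := (abs_lt.mp hψz).2
    have := le_abs_self (ψ z₀)
    have : ψ z < B := by simp only [hB]; linarith [le_abs_self (ψ z₀)]
    linarith
  have hψz₀1 : -B < ψ z₀ := by
    have := neg_abs_le (ψ z₀); simp only [hB]; linarith
  have hψz₀2 : ψ z₀ ≤ A' := by
    have : ψ z₀ < B := by simp only [hB]; linarith [le_abs_self (ψ z₀)]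
    linarith
  have e1 := hsplit z hψz1 hψz2
  have e2 := hsplit z₀ hψz₀1 hψz₀2
  have t1 := htail z hz
  have t2 := htail z₀ (Metric.mem_closedBall_self (by norm_num))
  rw [Real.dist_eq] at hG'z ⊢
  calc |(∫ x in Set.Ioi (ψ z), f z x) - ∫ x in Set.Ioi (ψ z₀), f z₀ x|
      = |(G' z - G' z₀) + ((∫ x in Set.Ioi A', f z x) - ∫ x in Set.Ioi A', f z₀ x)| := by
        rw [e1, e2]; ring_nf
    _ ≤ |G' z - G' z₀| + |(∫ x in Set.Ioi A', f z x) - ∫ x in Set.Ioi A', f z₀ x| :=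
        abs_add_le _ _
    _ ≤ |G' z - G' z₀| + (|∫ x in Set.Ioi A', f z x| + |∫ x in Set.Ioi A', f z₀ x|) := by
        gcongr; exact abs_sub _ _
    _ < ε := by linarith
end

section
/- Let n ≥ 1, let ψ : ℝⁿ → ℝ be continuous, let h : ℝⁿ × ℝ → ℝ be continuous and nonnegative, and let ρ : ℝ → ℝ be continuous and nonnegative. Assume that for every z ∈ ℝⁿ the quantity G(z) := ∫_{ψ(z)}^{∞} h(z, x)·ρ(x) dx is finite, and that G is continuous on ℝⁿ. Then for every compact set K ⊆ ℝⁿ and every ε > 0 there exists A > 0 such that ∫_{max(ψ(z), A)}^{∞} h(z, x)·ρ(x) dx < ε for all z ∈ K; that is, the tail integrals converge uniformly on every compact set. -/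
open MeasureTheory

theorem stmt_6 (n : ℕ) (hn : 1 ≤ n)
    (ψ : (Fin n → ℝ) → ℝ) (hψ : Continuous ψ)
    (h : (Fin n → ℝ) × ℝ → ℝ) (hh : Continuous h) (hh0 : ∀ p, 0 ≤ h p)
    (ρ : ℝ → ℝ) (hρ : Continuous ρ) (hρ0 : ∀ x, 0 ≤ ρ x)
    (hint : ∀ z : Fin n → ℝ, IntegrableOn (fun x => h (z, x) * ρ x) (Set.Ioi (ψ z)))
    (hGcont : Continuous fun z => ∫ x in Set.Ioi (ψ z), h (z, x) * ρ x) :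
    ∀ K : Set (Fin n → ℝ), IsCompact K → ∀ ε > 0, ∃ A > 0,
      ∀ z ∈ K, (∫ x in Set.Ioi (max (ψ z) A), h (z, x) * ρ x) < ε := by
  intro K hK ε hε
  set f : (Fin n → ℝ) → ℝ → ℝ := fun z x => h (z, x) * ρ x with hfdef
  have hfc : ∀ z, Continuous (f z) := fun z =>
    (hh.comp (Continuous.prodMk_right z)).mul hρ
  have hf0 : ∀ z x, 0 ≤ f z x := fun z x => mul_nonneg (hh0 _) (hρ0 x)
  set G : (Fin n → ℝ) → ℝ := fun z => ∫ x in Set.Ioi (ψ z), f z x with hGdef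
  -- splitting the integral
  have hsplit : ∀ (z : Fin n → ℝ) (A : ℝ), (∫ x in Set.Ioi (max (ψ z) A), f z x)
      = G z - ∫ t in (ψ z)..(max (ψ z) A), f z t := by
    intro z A
    have hle : ψ z ≤ max (ψ z) A := le_max_left _ _
    rw [intervalIntegral.integral_of_le hle]
    have hunion : Set.Ioc (ψ z) (max (ψ z) A) ∪ Set.Ioi (max (ψ z) A) = Set.Ioi (ψ z) :=
      Set.Ioc_union_Ioi_eq_Ioi hle
    have hdisj : Disjoint (Set.Ioc (ψ z) (max (ψ z) A)) (Set.Ioi (max (ψ z) A)) :=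
      Set.Ioc_disjoint_Ioi le_rfl
    have h1 : IntegrableOn (f z) (Set.Ioc (ψ z) (max (ψ z) A)) :=
      (hint z).mono_set Set.Ioc_subset_Ioi_self
    have h2 : IntegrableOn (f z) (Set.Ioi (max (ψ z) A)) :=
      (hint z).mono_set (Set.Ioi_subset_Ioi hle)
    have key := MeasureTheory.setIntegral_union (f := f z) (μ := volume)
      hdisj measurableSet_Ioi h1 h2
    rw [hunion] at key
    have : G z = (∫ x in Set.Ioc (ψ z) (max (ψ z) A), f z x)
        + ∫ x in Set.Ioi (max (ψ z) A), f z x := key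
    linarith
  -- continuity of the tail for fixed A
  have hTcont : ∀ A : ℝ, Continuous (fun z => ∫ x in Set.Ioi (max (ψ z) A), f z x) := by
    intro A
    have huncurry : Continuous (Function.uncurry f) := by
      have : Function.uncurry f = fun p : (Fin n → ℝ) × ℝ => h p * ρ p.2 := rfl
      rw [this]
      exact hh.mul (hρ.comp continuous_snd)
    have hM : Continuous fun z => max (ψ z) A := hψ.max continuous_const
    have hI1 : Continuous fun z => ∫ t in (0:ℝ)..(max (ψ z) A), f z t :=
      intervalIntegral.continuous_parametric_intervalIntegral_of_continuous huncurry hM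
    have hI2 : Continuous fun z => ∫ t in (0:ℝ)..(ψ z), f z t :=
      intervalIntegral.continuous_parametric_intervalIntegral_of_continuous huncurry hψ
    have key : ∀ z, (∫ x in Set.Ioi (max (ψ z) A), f z x)
        = G z - ((∫ t in (0:ℝ)..(max (ψ z) A), f z t) - ∫ t in (0:ℝ)..(ψ z), f z t) := by
      intro z
      rw [hsplit z A, intervalIntegral.integral_interval_sub_left
        ((hfc z).intervalIntegrable _ _) ((hfc z).intervalIntegrable _ _)]
    have : (fun z => ∫ x in Set.Ioi (max (ψ z) A), f z x)
        = fun z => G z - ((∫ t in (0:ℝ)..(max (ψ z) A), f z t)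
            - ∫ t in (0:ℝ)..(ψ z), f z t) := funext key
    rw [this]
    exact hGcont.sub (hI1.sub hI2)
  -- antitonicity of the tail in A
  have hmono : ∀ (z : Fin n → ℝ) (A B : ℝ), A ≤ B →
      (∫ x in Set.Ioi (max (ψ z) B), f z x) ≤ ∫ x in Set.Ioi (max (ψ z) A), f z x := by
    intro z A B hAB
    exact MeasureTheory.setIntegral_mono_set
      ((hint z).mono_set (Set.Ioi_subset_Ioi (le_max_left _ _)))
      (Filter.Eventually.of_forall fun x => hf0 z x)
      (Filter.Eventually.of_forall (Set.Ioi_subset_Ioi (max_le_max le_rfl hAB)))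
  -- pointwise smallness of the tail
  have hpt : ∀ z : Fin n → ℝ, ∃ A, 0 < A ∧ (∫ x in Set.Ioi (max (ψ z) A), f z x) < ε := by
    intro z
    have h1 : Filter.Tendsto (fun A : ℝ => ∫ t in (ψ z)..A, f z t) Filter.atTop (nhds (G z)) :=
      MeasureTheory.intervalIntegral_tendsto_integral_Ioi _ (hint z) Filter.tendsto_id
    have h2 : Filter.Tendsto (fun A : ℝ => G z - ∫ t in (ψ z)..A, f z t)
        Filter.atTop (nhds 0) := by
      simpa using h1.const_sub (G z)
    have h4 : ∀ᶠ A : ℝ in Filter.atTop, (∫ x in Set.Ioi (max (ψ z) A), f z x) < ε := by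
      filter_upwards [(tendsto_order.1 h2).2 ε hε, Filter.eventually_ge_atTop (ψ z)]
        with A hA hA2
      rw [hsplit z A, max_eq_right hA2]
      exact hA
    obtain ⟨A, hA1, hA2⟩ := ((Filter.eventually_gt_atTop (0:ℝ)).and h4).exists
    exact ⟨A, hA1, hA2⟩
  choose A hA0 hAlt using hpt
  -- compactness argument
  have hopen : ∀ z : Fin n → ℝ,
      IsOpen {w | (∫ x in Set.Ioi (max (ψ w) (A z)), f w x) < ε} :=
    fun z => isOpen_lt (hTcont (A z)) continuous_const
  have hcover : K ⊆ ⋃ z ∈ K, {w | (∫ x in Set.Ioi (max (ψ w) (A z)), f w x) < ε} :=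
    fun z hz => Set.mem_biUnion hz (hAlt z)
  obtain ⟨b, hbK, hbfin, hbcov⟩ :=
    hK.elim_finite_subcover_image (fun z _ => hopen z) hcover
  set A₀ : ℝ := 1 + ∑ z ∈ hbfin.toFinset, A z with hA₀def
  have hA₀pos : 0 < A₀ := by
    have : (0:ℝ) ≤ ∑ z ∈ hbfin.toFinset, A z :=
      Finset.sum_nonneg fun i _ => (hA0 i).le
    simp only [hA₀def]; linarith
  refine ⟨A₀, hA₀pos, fun w hw => ?_⟩
  obtain ⟨z, hz, hwz⟩ := Set.mem_iUnion₂.1 (hbcov hw)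
  have hzA : A z ≤ A₀ := by
    have h1 : A z ≤ ∑ i ∈ hbfin.toFinset, A i :=
      Finset.single_le_sum (fun i _ => (hA0 i).le) (hbfin.mem_toFinset.2 hz)
    simp only [hA₀def]; linarith
  calc (∫ x in Set.Ioi (max (ψ w) A₀), f w x)
      ≤ ∫ x in Set.Ioi (max (ψ w) (A z)), f w x := hmono w (A z) A₀ hzA
    _ < ε := hwz
end

section
/- Let f : ℝ → ℝ be nonnegative, continuous, and of linear growth. Then the discretely averaged option price converges to the continuously averaged one: lim_{d→∞} E[ f(S_A) ] = E[ f(S̄_T) ]. -/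
/-!
Pathwise, the discrete average `S_A` is a right Riemann sum of the continuous path `t ↦ S_t`,
so `f (S_A) → f (S̄_T)` everywhere. Linear growth dominates `|f (S_A)|` by `C (1 + R_d)`, where
`R_d` is the Riemann sum of `|S|`. These bounds depend on `d`, but they converge pointwise and,
by Fubini and the Gaussian moment generating function `E exp (σ W_t) = exp (σ² t / 2)`, also in
expectation, since `t ↦ E |S_t|` is continuous. Pratt's version of dominated convergence, with
moving dominating functions, then gives the convergence of the expectations.
-/

open MeasureTheory ProbabilityTheory Filter Set
open scoped Topology

section GeneralizedDominatedConvergence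

variable {α : Type*} [MeasurableSpace α] {μ : Measure α}

lemma eventually_lt_integral_of_tendsto_of_nonneg {H : ℕ → α → ℝ} {h : α → ℝ}
    (hH0 : ∀ n, ∀ᵐ a ∂μ, 0 ≤ H n a) (hHi : ∀ n, Integrable (H n) μ) (hh : Integrable h μ)
    (hlim : ∀ᵐ a ∂μ, Tendsto (fun n => H n a) atTop (𝓝 (h a))) {x : ℝ}
    (hx : x < ∫ a, h a ∂μ) :
    ∀ᶠ n in atTop, x < ∫ a, H n a ∂μ := by
  rcases lt_or_ge x 0 with hx0 | hx0
  · exact .of_forall fun n => hx0.trans_le (integral_nonneg_of_ae (hH0 n))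
  have hh0 : 0 ≤ᵐ[μ] h := by
    filter_upwards [hlim, ae_all_iff.2 hH0] with a ha hHa using ge_of_tendsto' ha hHa
  have fatou : ENNReal.ofReal (∫ a, h a ∂μ)
      ≤ liminf (fun n => ENNReal.ofReal (∫ a, H n a ∂μ)) atTop := by
    simp_rw [ofReal_integral_eq_lintegral_ofReal hh hh0,
      fun n => ofReal_integral_eq_lintegral_ofReal (hHi n) (hH0 n)]
    refine (lintegral_congr_ae ?_).trans_le
      (lintegral_liminf_le' fun n => (hHi n).aemeasurable.ennreal_ofReal)
    filter_upwards [hlim] with a ha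
    exact ((ENNReal.continuous_ofReal.tendsto _).comp ha).liminf_eq.symm
  filter_upwards [eventually_lt_of_lt_liminf
    ((ENNReal.ofReal_lt_ofReal_iff (hx0.trans_lt hx)).2 hx |>.trans_le fatou)] with n hn
  exact (ENNReal.ofReal_lt_ofReal_iff_of_nonneg hx0).1 hn

theorem tendsto_integral_of_dominated_convergence_of_tendsto_integral
    {F G : ℕ → α → ℝ} {f g : α → ℝ}
    (hFm : ∀ n, AEStronglyMeasurable (F n) μ) (hGi : ∀ n, Integrable (G n) μ)
    (hgi : Integrable g μ) (hbound : ∀ n, ∀ᵐ a ∂μ, |F n a| ≤ G n a)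
    (hFlim : ∀ᵐ a ∂μ, Tendsto (fun n => F n a) atTop (𝓝 (f a)))
    (hGlim : ∀ᵐ a ∂μ, Tendsto (fun n => G n a) atTop (𝓝 (g a)))
    (hGint : Tendsto (fun n => ∫ a, G n a ∂μ) atTop (𝓝 (∫ a, g a ∂μ))) :
    Tendsto (fun n => ∫ a, F n a ∂μ) atTop (𝓝 (∫ a, f a ∂μ)) := by
  have hFi n : Integrable (F n) μ := (hGi n).mono' (hFm n) (hbound n)
  have hfi : Integrable f μ := by
    refine hgi.mono' (aestronglyMeasurable_of_tendsto_ae _ hFm hFlim) ?_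
    filter_upwards [hFlim, hGlim, ae_all_iff.2 hbound] with a hFa hGa hbound
    exact le_of_tendsto_of_tendsto' hFa.abs hGa hbound
  -- Fatou's lemma applied to the nonnegative sequences `G n + F n` and `G n - F n`.
  have lower {x : ℝ} (hx : x < ∫ a, g a ∂μ + ∫ a, f a ∂μ) :
      ∀ᶠ n in atTop, x < ∫ a, G n a ∂μ + ∫ a, F n a ∂μ := by
    simp only [← integral_add (hGi _) (hFi _), ← integral_add hgi hfi] at hx ⊢
    refine eventually_lt_integral_of_tendsto_of_nonneg (H := fun n a => G n a + F n a)
      (fun n => ?_) (fun n => (hGi n).add (hFi n)) (hgi.add hfi) ?_ hx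
    · filter_upwards [hbound n] with a ha using by linarith [neg_abs_le (F n a)]
    · filter_upwards [hFlim, hGlim] with a hFa hGa using hGa.add hFa
  have upper {x : ℝ} (hx : x < ∫ a, g a ∂μ - ∫ a, f a ∂μ) :
      ∀ᶠ n in atTop, x < ∫ a, G n a ∂μ - ∫ a, F n a ∂μ := by
    simp only [← integral_sub (hGi _) (hFi _), ← integral_sub hgi hfi] at hx ⊢
    refine eventually_lt_integral_of_tendsto_of_nonneg (H := fun n a => G n a - F n a)
      (fun n => ?_) (fun n => (hGi n).sub (hFi n)) (hgi.sub hfi) ?_ hx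
    · filter_upwards [hbound n] with a ha using by linarith [le_abs_self (F n a)]
    · filter_upwards [hFlim, hGlim] with a hFa hGa using hGa.sub hFa
  have hGupper {ε : ℝ} (hε : 0 < ε) : ∀ᶠ n in atTop, ∫ a, G n a ∂μ < ∫ a, g a ∂μ + ε :=
    hGint.eventually (gt_mem_nhds (lt_add_of_pos_right _ hε))
  refine tendsto_order.2 ⟨fun x hx => ?_, fun x hx => ?_⟩
  · filter_upwards [lower (x := ∫ a, g a ∂μ + (∫ a, f a ∂μ + x) / 2) (by linarith),
      hGupper (half_pos (sub_pos.2 hx))] with n h₁ h₂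
    linarith
  · filter_upwards [upper (x := ∫ a, g a ∂μ - (∫ a, f a ∂μ + x) / 2) (by linarith),
      hGupper (half_pos (sub_pos.2 hx))] with n h₁ h₂
    linarith

end GeneralizedDominatedConvergence

section RiemannSum

noncomputable def rightRiemannAverage (g : ℝ → ℝ) (T : ℝ) (d : ℕ) : ℝ :=
  (1 / (d : ℝ)) * ∑ j ∈ Finset.Icc 1 d, g ((j : ℝ) * T / d)

variable {g : ℝ → ℝ} {T : ℝ}

lemma natCast_mul_div_mem_Icc (hT : 0 ≤ T) {j d : ℕ} (hjd : j ≤ d) :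
    (j : ℝ) * T / d ∈ Icc 0 T := by
  rcases Nat.eq_zero_or_pos d with rfl | hd
  · simp [Nat.le_zero.1 hjd, hT]
  refine ⟨by positivity, ?_⟩
  rw [div_le_iff₀ (Nat.cast_pos.2 hd), mul_comm]
  exact mul_le_mul_of_nonneg_left (Nat.cast_le.2 hjd) hT

lemma abs_rightRiemannAverage_le (d : ℕ) :
    |rightRiemannAverage g T d| ≤ rightRiemannAverage (fun t => |g t|) T d := by
  rw [rightRiemannAverage, rightRiemannAverage, abs_mul, abs_of_nonneg (by positivity)]
  gcongr
  exact Finset.abs_sum_le_sum_abs _ _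

lemma abs_mul_sub_intervalIntegral_le {a b ε : ℝ} (hab : a ≤ b)
    (hg : IntervalIntegrable g volume a b) (hε : ∀ t ∈ Icc a b, |g b - g t| ≤ ε) :
    |(b - a) * g b - ∫ t in a..b, g t| ≤ ε * (b - a) := by
  have hconst : (b - a) * g b = ∫ _ in a..b, g b := by simp
  rw [hconst, ← intervalIntegral.integral_sub (intervalIntegrable_const (c := g b)) hg,
    ← abs_of_nonneg (sub_nonneg.2 hab)]
  refine intervalIntegral.norm_integral_le_of_norm_le_const (E := ℝ) fun t ht => ?_
  rw [uIoc_of_le hab] at ht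
  exact hε t (Ioc_subset_Icc_self ht)

lemma abs_rightRiemannAverage_sub_le (hT : 0 < T) {d : ℕ} (hd : 0 < d)
    (hg : ContinuousOn g (Icc 0 T)) {ε : ℝ}
    (hε : ∀ x ∈ Icc 0 T, ∀ y ∈ Icc 0 T, |x - y| ≤ T / d → |g x - g y| ≤ ε) :
    |rightRiemannAverage g T d - (1 / T) * ∫ t in (0 : ℝ)..T, g t| ≤ ε := by
  have hd' : (0 : ℝ) < d := Nat.cast_pos.2 hd
  set t : ℕ → ℝ := fun k => k * T / d with ht
  have hstep k : t (k + 1) - t k = T / d := by simp only [ht]; push_cast; ring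
  have hmono k : t k ≤ t (k + 1) := by linarith [hstep k, div_pos hT hd']
  have hmem {k : ℕ} (hk : k ≤ d) : t k ∈ Icc 0 T := natCast_mul_div_mem_Icc hT.le hk
  have hsub {k : ℕ} (hk : k < d) : Icc (t k) (t (k + 1)) ⊆ Icc 0 T :=
    Icc_subset_Icc (hmem hk.le).1 (hmem hk).2
  have hsum : T * rightRiemannAverage g T d
      = ∑ k ∈ Finset.range d, (t (k + 1) - t k) * g (t (k + 1)) := by
    have hreindex : ∑ j ∈ Finset.Icc 1 d, g (t j) = ∑ k ∈ Finset.range d, g (t (k + 1)) := by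
      rw [Finset.range_eq_Ico, Finset.sum_Ico_add' (fun j => g (t j)), zero_add,
        Finset.Ico_add_one_right_eq_Icc]
    simp_rw [hstep, ← Finset.mul_sum]
    change T * (1 / d * ∑ j ∈ Finset.Icc 1 d, g (t j)) = T / d * ∑ k ∈ Finset.range d, g (t (k + 1))
    rw [hreindex]
    ring
  have hint k (hk : k < d) : IntervalIntegrable g volume (t k) (t (k + 1)) :=
    (hg.mono (hsub hk)).intervalIntegrable_of_Icc (hmono k)
  have hsplit : ∑ k ∈ Finset.range d, ∫ s in t k..t (k + 1), g s = ∫ s in (0 : ℝ)..T, g s := by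
    rw [intervalIntegral.sum_integral_adjacent_intervals hint]
    congr 1
    · simp [ht]
    · simp only [ht]; field_simp
  have hpiece {k : ℕ} (hk : k ∈ Finset.range d) :
      |(t (k + 1) - t k) * g (t (k + 1)) - ∫ s in t k..t (k + 1), g s| ≤ ε * (T / d) := by
    rw [Finset.mem_range] at hk
    refine hstep k ▸ abs_mul_sub_intervalIntegral_le (hmono k) (hint k hk) fun s hs => ?_
    refine hε _ (hmem hk) s (hsub hk hs) ?_
    rw [abs_of_nonneg (sub_nonneg.2 hs.2), ← hstep k]
    linarith [hs.1]
  have key : |T * rightRiemannAverage g T d - ∫ s in (0 : ℝ)..T, g s| ≤ ε * T := calc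
    _ = |∑ k ∈ Finset.range d,
          ((t (k + 1) - t k) * g (t (k + 1)) - ∫ s in t k..t (k + 1), g s)| := by
      rw [hsum, ← hsplit, Finset.sum_sub_distrib]
    _ ≤ ∑ k ∈ Finset.range d, ε * (T / d) :=
      (Finset.abs_sum_le_sum_abs _ _).trans (Finset.sum_le_sum fun k hk => hpiece hk)
    _ = ε * T := by
      rw [Finset.sum_const, Finset.card_range, nsmul_eq_mul]
      field_simp
  have hdiv : rightRiemannAverage g T d - (1 / T) * ∫ s in (0 : ℝ)..T, g s
      = (T * rightRiemannAverage g T d - ∫ s in (0 : ℝ)..T, g s) / T := by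
    field_simp
  rwa [hdiv, abs_div, abs_of_pos hT, div_le_iff₀ hT]

theorem tendsto_rightRiemannAverage (hT : 0 < T) (hg : ContinuousOn g (Icc 0 T)) :
    Tendsto (rightRiemannAverage g T) atTop (𝓝 ((1 / T) * ∫ t in (0 : ℝ)..T, g t)) := by
  refine Metric.tendsto_nhds.2 fun ε hε => ?_
  obtain ⟨δ, hδ, hunif⟩ := Metric.uniformContinuousOn_iff_le.1
    (isCompact_Icc.uniformContinuousOn_of_continuous hg) (ε / 2) (half_pos hε)
  filter_upwards [eventually_gt_atTop 0,
    (tendsto_const_div_atTop_nhds_zero_nat T).eventually (ge_mem_nhds hδ)] with d hd hmesh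
  refine (abs_rightRiemannAverage_sub_le hT hd hg fun x hx y hy hxy => ?_).trans_lt
    (half_lt_self hε)
  exact hunif x hx y hy (hxy.trans hmesh)

end RiemannSum

section RiemannAverageOfProcess

variable {Ω : Type*} [MeasurableSpace Ω] {P : Measure Ω} {X : ℝ → Ω → ℝ} {T : ℝ}

lemma measurable_rightRiemannAverage (hXmeas : ∀ t, Measurable (X t)) (d : ℕ) :
    Measurable fun ω => rightRiemannAverage (X · ω) T d := by
  unfold rightRiemannAverage
  fun_prop

lemma integrable_rightRiemannAverage (hT : 0 ≤ T) (hXint : ∀ t ∈ Icc 0 T, Integrable (X t) P)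
    (d : ℕ) : Integrable (fun ω => rightRiemannAverage (X · ω) T d) P :=
  (integrable_finsetSum _ fun _ hj =>
    hXint _ (natCast_mul_div_mem_Icc hT (Finset.mem_Icc.1 hj).2)).const_mul _

lemma integral_rightRiemannAverage (hT : 0 ≤ T) (hXint : ∀ t ∈ Icc 0 T, Integrable (X t) P)
    (d : ℕ) : ∫ ω, rightRiemannAverage (X · ω) T d ∂P
      = rightRiemannAverage (fun t => ∫ ω, X t ω ∂P) T d := by
  simp only [rightRiemannAverage]
  rw [integral_const_mul,
    integral_finsetSum _ fun _ hj => hXint _ (natCast_mul_div_mem_Icc hT (Finset.mem_Icc.1 hj).2)]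

lemma integrable_uncurry_restrict_Ioc [SFinite P] (hXmeas : ∀ t, Measurable (X t))
    (hXcont : ∀ ω, Continuous (X · ω)) (hXint : ∀ t ∈ Icc 0 T, Integrable (X t) P)
    (hm : ContinuousOn (fun t => ∫ ω, |X t ω| ∂P) (Icc 0 T)) :
    Integrable (Function.uncurry X) ((volume.restrict (Ioc 0 T)).prod P) := by
  refine (integrable_prod_iff
    (measurable_uncurry_of_continuous_of_measurable hXcont hXmeas).aestronglyMeasurable).2
    ⟨(ae_restrict_iff' measurableSet_Ioc).2
      (.of_forall fun t ht => hXint t (Ioc_subset_Icc_self ht)), ?_⟩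
  exact (hm.integrableOn_compact isCompact_Icc).mono_set Ioc_subset_Icc_self

lemma integrable_intervalIntegral [SFinite P] (hT : 0 ≤ T) (hXmeas : ∀ t, Measurable (X t))
    (hXcont : ∀ ω, Continuous (X · ω)) (hXint : ∀ t ∈ Icc 0 T, Integrable (X t) P)
    (hm : ContinuousOn (fun t => ∫ ω, |X t ω| ∂P) (Icc 0 T)) :
    Integrable (fun ω => ∫ t in (0 : ℝ)..T, X t ω) P := by
  simp_rw [intervalIntegral.integral_of_le hT]
  exact (integrable_uncurry_restrict_Ioc hXmeas hXcont hXint hm).integral_prod_right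

theorem tendsto_integral_rightRiemannAverage [SFinite P] (hT : 0 < T)
    (hX0 : ∀ t ω, 0 ≤ X t ω) (hXmeas : ∀ t, Measurable (X t))
    (hXcont : ∀ ω, Continuous (X · ω)) (hXint : ∀ t ∈ Icc 0 T, Integrable (X t) P)
    (hm : ContinuousOn (fun t => ∫ ω, X t ω ∂P) (Icc 0 T)) :
    Tendsto (fun d => ∫ ω, rightRiemannAverage (X · ω) T d ∂P) atTop
      (𝓝 (∫ ω, (1 / T) * (∫ t in (0 : ℝ)..T, X t ω) ∂P)) := by
  have hm' : ContinuousOn (fun t => ∫ ω, |X t ω| ∂P) (Icc 0 T) := by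
    simpa only [abs_of_nonneg (hX0 _ _)] using hm
  have hprod := integrable_uncurry_restrict_Ioc hXmeas hXcont hXint hm'
  rw [← uIoc_of_le hT.le] at hprod
  rw [integral_const_mul, ← intervalIntegral_integral_swap hprod]
  exact (tendsto_rightRiemannAverage hT hm).congr fun d =>
    (integral_rightRiemannAverage hT.le hXint d).symm

theorem tendsto_integral_comp_rightRiemannAverage [IsFiniteMeasure P] (hT : 0 < T)
    (hXmeas : ∀ t, Measurable (X t)) (hXcont : ∀ ω, Continuous (X · ω))
    (hXint : ∀ t ∈ Icc 0 T, Integrable (X t) P)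
    (hm : ContinuousOn (fun t => ∫ ω, |X t ω| ∂P) (Icc 0 T))
    {f : ℝ → ℝ} (hfc : Continuous f) {C : ℝ} (hfC : ∀ x, |f x| ≤ C * (1 + |x|)) :
    Tendsto (fun d => ∫ ω, f (rightRiemannAverage (X · ω) T d) ∂P) atTop
      (𝓝 (∫ ω, f ((1 / T) * ∫ t in (0 : ℝ)..T, X t ω) ∂P)) := by
  have hC : 0 ≤ C := by simpa using (abs_nonneg _).trans (hfC 0)
  have hYmeas t : Measurable fun ω => |X t ω| := (hXmeas t).abs
  have hYcont ω : Continuous fun t => |X t ω| := (hXcont ω).abs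
  have hYint t (ht : t ∈ Icc 0 T) : Integrable (fun ω => |X t ω|) P := (hXint t ht).abs
  have hRint d := integrable_rightRiemannAverage hT.le hYint d
  have hAvgInt : Integrable (fun ω => (1 / T) * ∫ t in (0 : ℝ)..T, |X t ω|) P :=
    (integrable_intervalIntegral hT.le hYmeas hYcont hYint (by simpa using hm)).const_mul _
  have hRiemann {Y : ℝ → Ω → ℝ} (hY : ∀ ω, Continuous (Y · ω)) ω :=
    tendsto_rightRiemannAverage hT (hY ω).continuousOn
  refine tendsto_integral_of_dominated_convergence_of_tendsto_integral
    (G := fun d ω => C * (1 + rightRiemannAverage (|X · ω|) T d))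
    (g := fun ω => C * (1 + (1 / T) * ∫ t in (0 : ℝ)..T, |X t ω|))
    (fun d => (hfc.measurable.comp (measurable_rightRiemannAverage hXmeas d)).aestronglyMeasurable)
    (fun d => ((integrable_const 1).add (hRint d)).const_mul C)
    (((integrable_const 1).add hAvgInt).const_mul C)
    (fun d => .of_forall fun ω => (hfC _).trans ?_)
    (.of_forall fun ω => (hfc.tendsto _).comp (hRiemann hXcont ω))
    (.of_forall fun ω => ((hRiemann hYcont ω).const_add 1).const_mul C) ?_
  · gcongr
    exact abs_rightRiemannAverage_le d
  · simp_rw [integral_const_mul, integral_add (integrable_const 1) (hRint _),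
      integral_add (integrable_const 1) hAvgInt]
    exact ((tendsto_integral_rightRiemannAverage hT (fun _ _ => abs_nonneg _) hYmeas hYcont
      hYint hm).const_add _).const_mul C

end RiemannAverageOfProcess

section Gaussian

open Real

variable {Ω : Type*} [MeasurableSpace Ω] {P : Measure Ω} {Z : Ω → ℝ} {v : NNReal}

lemma integrable_mul_exp_add_mul_of_map_eq_gaussianReal (hZ : P.map Z = gaussianReal 0 v)
    (a b c : ℝ) : Integrable (fun ω => a * rexp (b + c * Z ω)) P := by
  have hmgf : Integrable (fun ω => rexp (c * Z ω)) P := by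
    by_contra h
    exact (exp_pos _).ne' ((mgf_gaussianReal hZ c).symm.trans (mgf_undef h))
  simpa only [exp_add, mul_assoc] using (hmgf.const_mul (rexp b)).const_mul a

lemma integral_mul_exp_add_mul_of_map_eq_gaussianReal (hZ : P.map Z = gaussianReal 0 v)
    (a b c : ℝ) : ∫ ω, a * rexp (b + c * Z ω) ∂P = a * rexp (b + v * c ^ 2 / 2) := by
  simp only [exp_add, ← mul_assoc]
  rw [integral_const_mul, ← mgf, mgf_gaussianReal hZ, zero_mul, zero_add]

lemma map_eq_gaussianReal_of_map_sub_eq_gaussianReal {W : ℝ → Ω → ℝ}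
    (hW0 : ∀ ω, W 0 ω = 0)
    (hWgauss : ∀ s t : ℝ, 0 ≤ s → s ≤ t →
      P.map (fun ω => W t ω - W s ω) = gaussianReal 0 (Real.toNNReal (t - s)))
    {t : ℝ} (ht : 0 ≤ t) : P.map (W t) = gaussianReal 0 t.toNNReal := by
  simpa [hW0] using hWgauss 0 t le_rfl ht

end Gaussian

theorem stmt_11_general
    {Ω : Type*} [MeasurableSpace Ω] (P : Measure Ω) [IsProbabilityMeasure P]
    (W : ℝ → Ω → ℝ)
    (hWmeas : ∀ t : ℝ, Measurable (W t))
    (hW0 : ∀ ω : Ω, W 0 ω = 0)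
    (hWcont : ∀ ω : Ω, Continuous fun t => W t ω)
    (hWgauss : ∀ s t : ℝ, 0 ≤ s → s ≤ t →
      Measure.map (fun ω => W t ω - W s ω) P = gaussianReal 0 (Real.toNNReal (t - s)))
    (T S0 σ : ℝ) (hT : 0 < T)
    (ω₀ : ℝ)
    (S : ℝ → Ω → ℝ) (hS : ∀ t ω, S t ω = S0 * Real.exp (ω₀ * t + σ * W t ω))
    (Sbar : Ω → ℝ) (hSbar : ∀ ω, Sbar ω = (1 / T) * ∫ t in (0:ℝ)..T, S t ω)
    (SA : ℕ → Ω → ℝ)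
    (hSA : ∀ (d : ℕ) (ω : Ω),
      SA d ω = (1 / (d : ℝ)) * ∑ j ∈ Finset.Icc 1 d, S ((j : ℝ) * T / d) ω)
    (f : ℝ → ℝ) (hfc : Continuous f)
    (hfg : ∃ C > 0, ∀ x, |f x| ≤ C * (1 + |x|))
 :
    Tendsto (fun d : ℕ =>
        ∫ ω, f (SA d ω) ∂P) atTop
      (nhds (∫ ω, f (Sbar ω) ∂P)) := by
  obtain ⟨C, -, hfC⟩ := hfg
  have hSfun t : S t = fun ω => S0 * Real.exp (ω₀ * t + σ * W t ω) := funext (hS t)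
  have hWt {t : ℝ} (ht : 0 ≤ t) := map_eq_gaussianReal_of_map_sub_eq_gaussianReal hW0 hWgauss ht
  have hSmeas t : Measurable (S t) := by
    have := hWmeas t
    rw [hSfun]
    fun_prop
  have hScont ω : Continuous (S · ω) := by
    have := hWcont ω
    simp only [hS]
    fun_prop
  have hSint t (ht : t ∈ Icc 0 T) : Integrable (S t) P :=
    hSfun t ▸ integrable_mul_exp_add_mul_of_map_eq_gaussianReal (hWt ht.1) _ _ _
  have hmean : ContinuousOn (fun t => ∫ ω, |S t ω| ∂P) (Icc 0 T) := by
    have hcont : Continuous fun t : ℝ => |S0| * Real.exp (ω₀ * t + t * σ ^ 2 / 2) := by fun_prop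
    refine hcont.continuousOn.congr fun t ht => ?_
    simp only [hS, abs_mul, abs_of_pos (Real.exp_pos _)]
    rw [integral_mul_exp_add_mul_of_map_eq_gaussianReal (hWt ht.1), Real.coe_toNNReal _ ht.1]
  simp only [hSA, hSbar]
  exact tendsto_integral_comp_rightRiemannAverage hT hSmeas hScont hSint hmean hfc hfC

theorem stmt_11
    {Ω : Type*} [MeasurableSpace Ω] (P : Measure Ω) [IsProbabilityMeasure P]
    (W : ℝ → Ω → ℝ)
    (hWmeas : ∀ t : ℝ, Measurable (W t))
    (hW0 : ∀ ω : Ω, W 0 ω = 0)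
    (hWcont : ∀ ω : Ω, Continuous fun t => W t ω)
    (hWgauss : ∀ s t : ℝ, 0 ≤ s → s ≤ t →
      Measure.map (fun ω => W t ω - W s ω) P = gaussianReal 0 (Real.toNNReal (t - s)))
    (hWindep : ∀ (n : ℕ) (ts : Fin (n + 1) → ℝ), Monotone ts → 0 ≤ ts 0 →
      iIndepFun
        (fun (i : Fin n) (ω : Ω) => W (ts i.succ) ω - W (ts i.castSucc) ω) P)
    (T S0 σ r : ℝ) (hT : 0 < T) (hS0 : 0 < S0) (hσ : 0 < σ) (hr : 0 < r)
    (ω₀ : ℝ) (hω₀ : ω₀ = r - σ ^ 2 / 2)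
    (S : ℝ → Ω → ℝ) (hS : ∀ t ω, S t ω = S0 * Real.exp (ω₀ * t + σ * W t ω))
    (Sbar : Ω → ℝ) (hSbar : ∀ ω, Sbar ω = (1 / T) * ∫ t in (0:ℝ)..T, S t ω)
    (SA : ℕ → Ω → ℝ)
    (hSA : ∀ (d : ℕ) (ω : Ω),
      SA d ω = (1 / (d : ℝ)) * ∑ j ∈ Finset.Icc 1 d, S ((j : ℝ) * T / d) ω)
    (f : ℝ → ℝ) (hf0 : ∀ x, 0 ≤ f x) (hfc : Continuous f)
    (hfg : ∃ C > 0, ∀ x, |f x| ≤ C * (1 + |x|))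
 :
    Tendsto (fun d : ℕ =>
        ∫ ω, f (SA d ω) ∂P) atTop
      (nhds (∫ ω, f (Sbar ω) ∂P)) :=
  stmt_11_general P W hWmeas hW0 hWcont hWgauss T S0 σ hT ω₀ S hS Sbar hSbar SA hSA f hfc hfg
end

section
/- The conditional Malliavin estimate of the delta of the binary Asian option is given by the following Gaussian integral identity: ∫_{ψ}^{∞} (2·e^{−rT}/(S_0·σ²)) · ( (S_d(x) − S_0)/(T·S_A(x)) − ω₀ ) · φ(x) dx = ( 2·e^{−rT}·S̃_d/(T·S_0·S̃_A·σ²) − 2·e^{−rT}·ω₀/(S_0·σ²) )·Φ(−ψ) − ( 2·e^{−rT − r·t₁ + σ²·t₁}/(T·S̃_A·σ²) )·Φ(−σ·√t₁ − ψ). -/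
open MeasureTheory

lemma gauss_int : Integrable (fun x : ℝ => Real.exp (-x ^ 2 / 2)) := by
  have h := integrable_exp_neg_mul_sq (b := (1/2 : ℝ)) (by norm_num)
  convert h using 2 with x
  ring_nf

lemma gauss_shift (a : ℝ) : Integrable (fun x : ℝ => Real.exp (-(x + a) ^ 2 / 2)) :=
  gauss_int.comp_add_right a

lemma trans_Ioi (f : ℝ → ℝ) (a c : ℝ) :
    (∫ x in Set.Ioi c, f (x + a)) = ∫ x in Set.Ioi (c + a), f x := by
  have A : MeasurableEmbedding (fun x : ℝ => x + a) :=
    (Homeomorph.addRight a).isClosedEmbedding.measurableEmbedding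
  have h := A.setIntegral_map (μ := volume) f (Set.Ioi (c + a))
  rw [map_add_right_eq_self volume a] at h
  rw [Set.preimage_add_const_Ioi, add_sub_cancel_right] at h
  exact h.symm

theorem stmt_15
    (T S0 σ r : ℝ) (hT : 0 < T) (hS0 : 0 < S0) (hσ : 0 < σ) (hr : 0 < r)
    (d : ℕ) (hd : 2 ≤ d)
    (A : Fin d → Fin (d - 1) → ℝ) (hA0 : A ⟨0, by omega⟩ = 0)
    (z : Fin (d - 1) → ℝ)
    (ω₀ : ℝ) (hω₀ : ω₀ = r - σ ^ 2 / 2)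
    (t1 : ℝ) (ht1 : t1 = T / d)
    (Stil : Fin d → ℝ)
    (hStil : ∀ j : Fin d,
      Stil j = S0 * Real.exp (ω₀ * ((j : ℝ) * T / d) + σ * ∑ k, A j k * z k))
    (StilA : ℝ) (hStilA : StilA = (1 / (d : ℝ)) * ∑ j, Stil j)
    (Stild : ℝ) (hStild : Stild = Stil ⟨d - 1, by omega⟩)
    (SA Sd : ℝ → ℝ)
    (hSA : ∀ x, SA x = Real.exp (ω₀ * t1 + σ * Real.sqrt t1 * x) * StilA)
    (hSd : ∀ x, Sd x = Real.exp (ω₀ * t1 + σ * Real.sqrt t1 * x) * Stild)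
    (φ : ℝ → ℝ) (hφ : ∀ x, φ x = (Real.sqrt (2 * Real.pi))⁻¹ * Real.exp (-x ^ 2 / 2))
    (K : ℝ) (hK : 0 < K)
    (ψ : ℝ) (hψ : ψ = (Real.log K - Real.log StilA - ω₀ * t1) / (σ * Real.sqrt t1))
    (Φ : ℝ → ℝ) (hΦ : ∀ x, Φ x = ∫ u in Set.Iic x, φ u) :
    (∫ x in Set.Ioi ψ,
        (2 * Real.exp (-r * T) / (S0 * σ ^ 2)) * ((Sd x - S0) / (T * SA x) - ω₀) * φ x)
      = (2 * Real.exp (-r * T) * Stild / (T * S0 * StilA * σ ^ 2)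
            - 2 * Real.exp (-r * T) * ω₀ / (S0 * σ ^ 2)) * Φ (-ψ)
        - (2 * Real.exp (-r * T - r * t1 + σ ^ 2 * t1) / (T * StilA * σ ^ 2))
            * Φ (-(σ * Real.sqrt t1) - ψ) := by
  have hdpos : (0 : ℝ) < d := by
    have : (0:ℕ) < d := by omega
    exact_mod_cast this
  have ht1pos : 0 < t1 := by rw [ht1]; positivity
  have hsq : 0 < Real.sqrt t1 := Real.sqrt_pos.mpr ht1pos
  set a : ℝ := σ * Real.sqrt t1 with ha
  have ha2 : a ^ 2 = σ ^ 2 * t1 := by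
    rw [ha, mul_pow, Real.sq_sqrt ht1pos.le]
  have hStilj : ∀ j : Fin d, 0 < Stil j := fun j => by rw [hStil]; positivity
  have hStilApos : 0 < StilA := by
    rw [hStilA]
    have : (Finset.univ : Finset (Fin d)).Nonempty := ⟨⟨0, by omega⟩, Finset.mem_univ _⟩
    have hs := Finset.sum_pos (fun j _ => hStilj j) this
    positivity
  have hTne : T ≠ 0 := ne_of_gt hT
  have hS0ne : S0 ≠ 0 := ne_of_gt hS0
  have hσne : σ ≠ 0 := ne_of_gt hσ
  have hSAne : StilA ≠ 0 := ne_of_gt hStilApos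
  set c2 : ℝ := (Real.sqrt (2 * Real.pi))⁻¹ with hc2
  set k1 : ℝ := 2 * Real.exp (-r * T) / (S0 * σ ^ 2) * (Stild / (T * StilA) - ω₀) with hk1def
  set k2 : ℝ := 2 * Real.exp (-r * T) / (S0 * σ ^ 2) * (S0 * Real.exp (-(ω₀ * t1)) / (T * StilA)) with hk2def
  -- pointwise decomposition of the integrand
  have hpt : ∀ x : ℝ,
      (2 * Real.exp (-r * T) / (S0 * σ ^ 2)) * ((Sd x - S0) / (T * SA x) - ω₀) * φ x
        = k1 * φ x - k2 * (Real.exp (-(a * x)) * φ x) := by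
    intro x
    rw [hSd, hSA, hk1def, hk2def]
    have hE : Real.exp (ω₀ * t1 + σ * Real.sqrt t1 * x) ≠ 0 := Real.exp_ne_zero _
    have e1 : Real.exp (ω₀ * t1 + σ * Real.sqrt t1 * x)
        = Real.exp (ω₀ * t1) * Real.exp (a * x) := by
      rw [← Real.exp_add, ha]
    have e2 : Real.exp (-(ω₀ * t1)) = (Real.exp (ω₀ * t1))⁻¹ := Real.exp_neg _
    have e3 : Real.exp (-(a * x)) = (Real.exp (a * x))⁻¹ := Real.exp_neg _
    rw [e1, e2, e3]
    have h1 : Real.exp (ω₀ * t1) ≠ 0 := Real.exp_ne_zero _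
    have h2 : Real.exp (a * x) ≠ 0 := Real.exp_ne_zero _
    field_simp
    ring
  -- the exponential-shift identity
  have hshift : ∀ x : ℝ, Real.exp (-(a * x)) * φ x
      = Real.exp (a ^ 2 / 2) * φ (x + a) := by
    intro x
    rw [hφ, hφ]
    rw [show Real.exp (-(a * x)) * (c2 * Real.exp (-x ^ 2 / 2))
        = c2 * (Real.exp (-(a * x)) * Real.exp (-x ^ 2 / 2)) from by ring,
      ← Real.exp_add,
      show -(a * x) + -x ^ 2 / 2 = a ^ 2 / 2 + -(x + a) ^ 2 / 2 from by ring,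
      Real.exp_add]
    ring
  -- integrability
  have hφeq : φ = fun x => c2 * Real.exp (-x ^ 2 / 2) := funext hφ
  have hφint : Integrable φ := by
    rw [hφeq]; exact gauss_int.const_mul c2
  have h2int : Integrable (fun x => Real.exp (-(a * x)) * φ x) := by
    have : (fun x => Real.exp (-(a * x)) * φ x)
        = fun x => (Real.exp (a ^ 2 / 2) * c2) * Real.exp (-(x + a) ^ 2 / 2) := by
      funext x
      rw [hshift x, hφ]; ring
    rw [this]
    exact (gauss_shift a).const_mul _
  -- evenness of φ
  have hφeven : ∀ x : ℝ, φ (-x) = φ x := by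
    intro x; rw [hφ, hφ, neg_sq]
  -- ∫ over Ioi c of φ equals ∫ over Iic (-c)
  have hIoiIic : ∀ c : ℝ, (∫ x in Set.Ioi c, φ x) = ∫ u in Set.Iic (-c), φ u := by
    intro c
    have h := integral_comp_neg_Iic (-c) φ
    rw [neg_neg] at h
    rw [← h]
    exact setIntegral_congr_fun measurableSet_Iic fun x _ => (hφeven x)
  -- the two basic integrals
  have I0 : (∫ x in Set.Ioi ψ, φ x) = Φ (-ψ) := by
    rw [hΦ]; exact hIoiIic ψ
  have I1 : (∫ x in Set.Ioi ψ, Real.exp (-(a * x)) * φ x)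
      = Real.exp (a ^ 2 / 2) * Φ (-(σ * Real.sqrt t1) - ψ) := by
    have harg : -(σ * Real.sqrt t1) - ψ = -(ψ + a) := by rw [ha]; ring
    calc (∫ x in Set.Ioi ψ, Real.exp (-(a * x)) * φ x)
        = ∫ x in Set.Ioi ψ, Real.exp (a ^ 2 / 2) * φ (x + a) :=
          setIntegral_congr_fun measurableSet_Ioi fun x _ => hshift x
      _ = Real.exp (a ^ 2 / 2) * ∫ x in Set.Ioi ψ, φ (x + a) := by rw [integral_const_mul]
      _ = Real.exp (a ^ 2 / 2) * ∫ x in Set.Ioi (ψ + a), φ x := by rw [trans_Ioi]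
      _ = Real.exp (a ^ 2 / 2) * Φ (-(σ * Real.sqrt t1) - ψ) := by
          rw [hIoiIic, hΦ, harg]
  -- split the integral
  have hsplit : (∫ x in Set.Ioi ψ,
      (2 * Real.exp (-r * T) / (S0 * σ ^ 2)) * ((Sd x - S0) / (T * SA x) - ω₀) * φ x)
      = k1 * (∫ x in Set.Ioi ψ, φ x)
        - k2 * ∫ x in Set.Ioi ψ, Real.exp (-(a * x)) * φ x := by
    rw [setIntegral_congr_fun measurableSet_Ioi fun x _ => hpt x]
    rw [integral_sub ((hφint.const_mul k1).integrableOn)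
      ((h2int.const_mul k2).integrableOn), integral_const_mul, integral_const_mul]
  rw [hsplit, I0, I1]
  -- final algebra on the coefficients
  have hk1 : k1 = 2 * Real.exp (-r * T) * Stild / (T * S0 * StilA * σ ^ 2)
      - 2 * Real.exp (-r * T) * ω₀ / (S0 * σ ^ 2) := by
    rw [hk1def]; field_simp
  have hexp : Real.exp (-r * T) * (Real.exp (-(ω₀ * t1)) * Real.exp (σ ^ 2 * t1 / 2))
      = Real.exp (-r * T - r * t1 + σ ^ 2 * t1) := by
    rw [← Real.exp_add, ← Real.exp_add]
    congr 1
    rw [hω₀]; ring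
  have hk2 : k2 * Real.exp (a ^ 2 / 2)
      = 2 * Real.exp (-r * T - r * t1 + σ ^ 2 * t1) / (T * StilA * σ ^ 2) := by
    rw [hk2def, show a ^ 2 / 2 = σ ^ 2 * t1 / 2 from by rw [ha2], ← hexp]
    field_simp
  linear_combination Φ (-ψ) * hk1 - Φ (-(σ * Real.sqrt t1) - ψ) * hk2
end
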